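/- arXiv:1705.10065 — 7 statements merged into one kernel-verified Lean document; each statement's English description precedes it below -/
import Mathlib

section
/- For any base b ≥ 2, any letter x ∈ {1,...,b-1}, and any word u over the alphabet {0,...,b-1}, the number of words in L_b occurring as scattered subwords of x00u equals twice the number of words in L_b occurring as scattered subwords of x0u minus the number of words in L_b occurring as scattered subwords of xu. -/
/-- Number of distinct words in `L_b` (no leading zero, or empty) occurring as
scattered subwords (subsequences) of `u`. -/
def lbCount (u : List ℕ) : ℕ :=
  ((u.sublists.filter (fun v => v.head? ≠ some 0)).dedup).length

/-- `S_b(n)`: number of distinct words of `L_b` occurring as scattered subwords of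
the base-`b` expansion of `n` (most significant digit first, `rep_b(0) = ε`). -/
def Sb (b n : ℕ) : ℕ := lbCount ((Nat.digits b n).reverse)

/-- Summatory function `A_b(n) = ∑_{j<n} S_b(j)`. -/
def Asum (b n : ℕ) : ℕ := ∑ j ∈ Finset.range n, Sb b j

/-!
A subword of `a w` either is a subword of `w` or is `a s` with `s` a subword of `w`; the two kinds
overlap in the words `a s` with `a s ⊑ w`. For `x ≠ 0` this splits the subwords of `x w` without
leading zero into those of `w` and the set `x · Sub(w)`, with an overlap that does not change when
a zero is prepended to `w`. So prepending a zero behind `x` changes the count exactly as it changes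
`|Sub w|`, and the claim becomes `|Sub 00u| = 2 |Sub 0u| - |Sub u|`: by the first remark the
overlap for `0 · 0u` consists of the `0s` with `0s ⊑ 0u`, i.e. with `s ⊑ u`.
-/

open Finset

namespace List

variable {α : Type*} [DecidableEq α]

def subwords (w : List α) : Finset (List α) := w.sublists.toFinset

@[simp]
theorem mem_subwords {v w : List α} : v ∈ w.subwords ↔ v <+ w := by
  simp [subwords]

theorem filter_subwords_cons_of_forall {P : List α → Prop} [DecidablePred P] (a : α)
    (w : List α) (hP : ∀ s, P (a :: s)) :
    (a :: w).subwords.filter P = w.subwords.filter P ∪ w.subwords.image (cons a) := by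
  ext v
  simp only [Finset.mem_filter, mem_subwords, mem_union, mem_image]
  constructor
  · rintro ⟨hv, hPv⟩
    rcases sublist_cons_iff.mp hv with hv | ⟨s, rfl, hs⟩
    · exact Or.inl ⟨hv, hPv⟩
    · exact Or.inr ⟨s, hs, rfl⟩
  · rintro (⟨hv, hPv⟩ | ⟨s, hs, rfl⟩)
    · exact ⟨hv.cons a, hPv⟩
    · exact ⟨hs.cons_cons a, hP s⟩

theorem filter_subwords_cons_of_forall_not {P : List α → Prop} [DecidablePred P] (a : α)
    (w : List α) (hP : ∀ s, ¬ P (a :: s)) :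
    (a :: w).subwords.filter P = w.subwords.filter P := by
  ext v
  simp only [Finset.mem_filter, mem_subwords]
  constructor
  · rintro ⟨hv, hPv⟩
    rcases sublist_cons_iff.mp hv with hv | ⟨s, rfl, -⟩
    · exact ⟨hv, hPv⟩
    · exact absurd hPv (hP s)
  · rintro ⟨hv, hPv⟩
    exact ⟨hv.cons a, hPv⟩

theorem card_filter_subwords_cons_add {P : List α → Prop} [DecidablePred P] (a : α)
    (w : List α) (hP : ∀ s, P (a :: s)) :
    #((a :: w).subwords.filter P) + #(w.subwords.filter (a :: · <+ w)) =
      #(w.subwords.filter P) + #w.subwords := by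
  have hinter : w.subwords.filter P ∩ w.subwords.image (cons a) =
      (w.subwords.filter (a :: · <+ w)).image (cons a) := by
    ext v
    simp only [mem_inter, Finset.mem_filter, mem_image, mem_subwords]
    constructor
    · rintro ⟨⟨has, -⟩, s, hs, rfl⟩
      exact ⟨s, ⟨hs, has⟩, rfl⟩
    · rintro ⟨s, ⟨hs, has⟩, rfl⟩
      exact ⟨⟨has, hP s⟩, s, hs, rfl⟩
  have h := card_union_add_card_inter (w.subwords.filter P) (w.subwords.image (cons a))
  rwa [← filter_subwords_cons_of_forall a w hP, hinter, card_image_of_injective _ cons_injective,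
    card_image_of_injective _ cons_injective] at h

theorem card_subwords_cons_add (a : α) (w : List α) :
    #(a :: w).subwords + #(w.subwords.filter (a :: · <+ w)) = 2 * #w.subwords := by
  have h := card_filter_subwords_cons_add (P := fun _ => True) a w fun _ => trivial
  simp only [Finset.filter_true] at h
  omega

theorem filter_cons_sublist_cons_self (a : α) (w : List α) :
    (a :: w).subwords.filter (a :: · <+ a :: w) = w.subwords := by
  ext s
  simp only [Finset.mem_filter, mem_subwords, cons_sublist_cons]
  exact ⟨And.right, fun hs => ⟨hs.cons a, hs⟩⟩

theorem filter_cons_sublist_cons_of_ne {a c : α} (hac : a ≠ c) (w : List α) :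
    (c :: w).subwords.filter (a :: · <+ c :: w) = w.subwords.filter (a :: · <+ w) := by
  ext s
  simp only [Finset.mem_filter, mem_subwords]
  constructor
  · rintro ⟨-, has⟩
    rcases sublist_cons_iff.mp has with has | ⟨r, hr, -⟩
    · exact ⟨(sublist_cons_self a s).trans has, has⟩
    · exact absurd (head_eq_of_cons_eq hr) hac
  · rintro ⟨hs, has⟩
    exact ⟨hs.cons c, has.cons c⟩

end List

open List

theorem lbCount_eq_card (u : List ℕ) :
    lbCount u = #(u.subwords.filter (·.head? ≠ some 0)) := by
  rw [lbCount, subwords, ← card_toFinset]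
  congr 1
  ext v
  simp

theorem lbCount_cons_zero_sub {x : ℕ} (hx : x ≠ 0) (w : List ℕ) :
    (lbCount (x :: 0 :: w) : ℤ) - lbCount (x :: w) = #(0 :: w).subwords - #w.subwords := by
  have hhead : ∀ s : List ℕ, (x :: s).head? ≠ some 0 := by simpa using hx
  have h₀ := card_filter_subwords_cons_add (P := (·.head? ≠ some 0)) x w hhead
  have h₁ := card_filter_subwords_cons_add (P := (·.head? ≠ some 0)) x (0 :: w) hhead
  rw [filter_cons_sublist_cons_of_ne hx,
    filter_subwords_cons_of_forall_not 0 w (P := (·.head? ≠ some 0)) (by simp)] at h₁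
  rw [lbCount_eq_card, lbCount_eq_card]
  omega

theorem stmt0_general (x : ℕ) (hx : 1 ≤ x)
    (u : List ℕ) :
    (lbCount (x :: 0 :: 0 :: u) : ℤ) =
      2 * lbCount (x :: 0 :: u) - lbCount (x :: u) := by
  have hx₀ : x ≠ 0 := by omega
  have h₀ := lbCount_cons_zero_sub hx₀ u
  have h₁ := lbCount_cons_zero_sub hx₀ (0 :: u)
  have hsub := card_subwords_cons_add 0 (0 :: u)
  rw [filter_cons_sublist_cons_self] at hsub
  omega

theorem stmt0 (b x : ℕ) (hb : 2 ≤ b) (hx : 1 ≤ x) (hxb : x < b)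
    (u : List ℕ) (hu : ∀ d ∈ u, d < b) :
    (lbCount (x :: 0 :: 0 :: u) : ℤ) =
      2 * lbCount (x :: 0 :: u) - lbCount (x :: u) :=
  stmt0_general x hx u
end

section
/- For all b ≥ 2, all x ∈ {1,...,b-1}, all ℓ ≥ 1, and all r with 0 ≤ r < b^{ℓ-1}, one has S_b(x·b^ℓ + x·b^{ℓ-1} + r) = 2·S_b(x·b^{ℓ-1} + r) − S_b(r). -/
/-!
Let `D(u)` be the set of distinct subwords of a word `u` and `N(u) ⊆ D(u)` those not starting
with `0`, so that `S_b(n) = #N(rep_b n)`. For a letter `x ≠ 0`,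
`D(x u) = D(u) ∪ x·D(u)` and `N(x u) = N(u) ∪ x·D(u)`, and a word of `x·D(u)` lies in `N(u)` iff it
lies in `D(u)`; hence `#N(x u) - #N(u) = #D(x u) - #D(u)`. Moreover `#D(x x u) = 2 #D(x u) - #D(u)`,
because a subword `x t` of `x u` has `t` a subword of `u`. Combining the two at `u` and at `x u`
gives `#N(x x u) = 2 #N(x u) - #N(u)`. Finally `rep_b(x b^ℓ + x b^(ℓ-1) + r) = x x w` and
`rep_b(x b^(ℓ-1) + r) = x w`, where `w` is `rep_b r` padded with leading zeros, which do not
change `#N`.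
-/

namespace Subwords

def subwords (u : List ℕ) : Finset (List ℕ) := u.sublists.toFinset

def lbSubwords (u : List ℕ) : Finset (List ℕ) := (subwords u).filter (fun v => v.head? ≠ some 0)

@[simp]
lemma mem_subwords {u v : List ℕ} : v ∈ subwords u ↔ v.Sublist u := by
  simp [subwords]

@[simp]
lemma mem_lbSubwords {u v : List ℕ} : v ∈ lbSubwords u ↔ v.Sublist u ∧ v.head? ≠ some 0 := by
  simp [lbSubwords]

lemma lbCount_eq_card_lbSubwords (u : List ℕ) : lbCount u = (lbSubwords u).card := by
  rw [lbCount, lbSubwords, subwords, ← List.card_toFinset, List.toFinset_filter]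
  simp

lemma card_image_cons (a : ℕ) (s : Finset (List ℕ)) : (s.image (a :: ·)).card = s.card :=
  Finset.card_image_of_injective _ fun _ _ h => List.cons.inj h |>.2

lemma subwords_cons (a : ℕ) (u : List ℕ) :
    subwords (a :: u) = subwords u ∪ (subwords u).image (a :: ·) := by
  ext v
  simp only [mem_subwords, List.sublist_cons_iff, Finset.mem_union, Finset.mem_image]
  grind

lemma lbSubwords_cons {a : ℕ} (ha : a ≠ 0) (u : List ℕ) :
    lbSubwords (a :: u) = lbSubwords u ∪ (subwords u).image (a :: ·) := by
  ext v
  simp only [mem_lbSubwords, mem_subwords, List.sublist_cons_iff, Finset.mem_union,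
    Finset.mem_image]
  grind

lemma lbSubwords_zero_cons (u : List ℕ) : lbSubwords (0 :: u) = lbSubwords u := by
  ext v
  simp only [mem_lbSubwords, List.sublist_cons_iff]
  grind

lemma lbCount_replicate_zero_append (k : ℕ) (u : List ℕ) :
    lbCount (List.replicate k 0 ++ u) = lbCount u := by
  induction k with
  | zero => simp
  | succ k ih =>
    rw [List.replicate_succ, List.cons_append, lbCount_eq_card_lbSubwords, lbSubwords_zero_cons,
      ← lbCount_eq_card_lbSubwords, ih]

lemma lbSubwords_inter_image_cons {a : ℕ} (ha : a ≠ 0) (u v : List ℕ) :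
    lbSubwords u ∩ (subwords v).image (a :: ·) = subwords u ∩ (subwords v).image (a :: ·) := by
  ext w
  simp only [Finset.mem_inter, mem_lbSubwords, mem_subwords, Finset.mem_image]
  grind

lemma subwords_cons_inter_image_cons (a : ℕ) (u : List ℕ) :
    subwords (a :: u) ∩ (subwords (a :: u)).image (a :: ·) = (subwords u).image (a :: ·) := by
  ext w
  simp only [Finset.mem_inter, mem_subwords, Finset.mem_image]
  constructor
  · rintro ⟨hw, t, -, rfl⟩
    exact ⟨t, List.cons_sublist_cons.mp hw, rfl⟩
  · rintro ⟨t, ht, rfl⟩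
    exact ⟨ht.cons_cons a, t, ht.cons a, rfl⟩

lemma card_subwords_cons_cons (a : ℕ) (u : List ℕ) :
    (subwords (a :: a :: u)).card + (subwords u).card = 2 * (subwords (a :: u)).card := by
  have h := Finset.card_union_add_card_inter (subwords (a :: u)) ((subwords (a :: u)).image (a :: ·))
  rw [← subwords_cons, subwords_cons_inter_image_cons, card_image_cons, card_image_cons] at h
  omega

lemma card_lbSubwords_cons_add {a : ℕ} (ha : a ≠ 0) (u : List ℕ) :
    (lbSubwords (a :: u)).card + (subwords u).card =
      (lbSubwords u).card + (subwords (a :: u)).card := by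
  have hN := Finset.card_union_add_card_inter (lbSubwords u) ((subwords u).image (a :: ·))
  have hD := Finset.card_union_add_card_inter (subwords u) ((subwords u).image (a :: ·))
  rw [← lbSubwords_cons ha, lbSubwords_inter_image_cons ha] at hN
  rw [← subwords_cons] at hD
  omega

lemma lbCount_cons_cons_add {a : ℕ} (ha : a ≠ 0) (u : List ℕ) :
    lbCount (a :: a :: u) + lbCount u = 2 * lbCount (a :: u) := by
  simp only [lbCount_eq_card_lbSubwords]
  have h₁ := card_lbSubwords_cons_add ha u
  have h₂ := card_lbSubwords_cons_add ha (a :: u)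
  have h₃ := card_subwords_cons_cons a u
  omega

end Subwords

section Digits

variable {b k x r : ℕ}

lemma Nat.digits_mul_pow_add (hb : 1 < b) (hx : 0 < x) (hxb : x < b) (hr : r < b ^ k) :
    Nat.digits b (x * b ^ k + r) =
      Nat.digits b r ++ List.replicate (k - (Nat.digits b r).length) 0 ++ [x] := by
  have hlen := (Nat.digits_length_le_iff hb r).2 hr
  rw [← Nat.digits_of_lt b x hx.ne' hxb, Nat.digits_append_zeroes_append_digits hb hx,
    Nat.add_sub_cancel' hlen, add_comm, mul_comm]

lemma Nat.length_digits_mul_pow_add (hb : 1 < b) (hx : 0 < x) (hxb : x < b) (hr : r < b ^ k) :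
    (Nat.digits b (x * b ^ k + r)).length = k + 1 := by
  have hlen := (Nat.digits_length_le_iff hb r).2 hr
  simp only [Nat.digits_mul_pow_add hb hx hxb hr, List.length_append, List.length_replicate,
    List.length_singleton]
  omega

lemma Nat.reverse_digits_mul_pow_add (hb : 1 < b) (hx : 0 < x) (hxb : x < b) (hr : r < b ^ k) :
    (Nat.digits b (x * b ^ k + r)).reverse =
      x :: (List.replicate (k - (Nat.digits b r).length) 0 ++ (Nat.digits b r).reverse) := by
  simp [Nat.digits_mul_pow_add hb hx hxb hr]

end Digits

open Subwords in
theorem stmt6 (b x ℓ r : ℕ) (hb : 2 ≤ b) (hx : 1 ≤ x) (hxb : x < b)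
    (hℓ : 1 ≤ ℓ) (hr : r < b ^ (ℓ - 1)) :
    (Sb b (x * b ^ ℓ + x * b ^ (ℓ - 1) + r) : ℤ) =
      2 * Sb b (x * b ^ (ℓ - 1) + r) - Sb b r := by
  obtain ⟨k, rfl⟩ : ∃ k, ℓ = k + 1 := ⟨ℓ - 1, by omega⟩
  rw [Nat.add_sub_cancel] at hr ⊢
  have hlen := Nat.length_digits_mul_pow_add hb hx hxb hr
  have hr' : x * b ^ k + r < b ^ (k + 1) := (Nat.digits_length_le_iff hb _).1 hlen.le
  set w := List.replicate (k - (Nat.digits b r).length) 0 ++ (Nat.digits b r).reverse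
  have h₁ : Sb b (x * b ^ k + r) = lbCount (x :: w) := by
    rw [Sb, Nat.reverse_digits_mul_pow_add hb hx hxb hr]
  have h₂ : Sb b (x * b ^ (k + 1) + x * b ^ k + r) = lbCount (x :: x :: w) := by
    rw [Sb, add_assoc, Nat.reverse_digits_mul_pow_add hb hx hxb hr', hlen, Nat.sub_self,
      List.replicate_zero, List.nil_append, Nat.reverse_digits_mul_pow_add hb hx hxb hr]
  have h₃ : Sb b r = lbCount w := (lbCount_replicate_zero_append _ _).symm
  have := lbCount_cons_cons_add (Nat.one_le_iff_ne_zero.mp hx) w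
  omega
end

section
/- For all b ≥ 2, all distinct x, y ∈ {1,...,b-1}, all ℓ ≥ 1, and all r with 0 ≤ r < b^{ℓ-1}, one has S_b(x·b^ℓ + y·b^{ℓ-1} + r) = S_b(x·b^{ℓ-1} + r) + 2·S_b(y·b^{ℓ-1} + r) − 2·S_b(r). -/
/-!
Write `D(w)` for the number of distinct subwords of a word `w`, and `C_a(w)` for the number of
those starting with the letter `a`. A subword of `a w` is a subword of `w` or `a` followed by one,
and the two kinds overlap exactly in the subwords of `w` starting with `a`; hence
`D(a w) = 2 D(w) - C_a(w)`, `C_a(a w) = D(w)` and `C_x(a w) = C_x(w)` for `x ≠ a`.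
The count `S_b` is `D - C_0` on the digit word, which is blind to leading zeros. Writing
`rep_b(r)`, padded with zeros to length `ℓ - 1`, as `w`, the four arguments of `S_b` in the
theorem have digit words `x y w`, `x w`, `y w` and `w`, and both sides of the identity equal
`4 D(w) - C_x(w) - 2 C_y(w) - C_0(w)`.
-/

open Finset

namespace List

variable {α : Type*} [DecidableEq α]

def subwordsHeadEq (a : α) (w : List α) : Finset (List α) :=
  w.subwords.filter (·.head? = some a)

def subwordsHeadNe (a : α) (w : List α) : Finset (List α) :=
  w.subwords.filter (·.head? ≠ some a)

theorem subwords_cons (a : α) (w : List α) :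
    (a :: w).subwords = w.subwords ∪ w.subwords.image (a :: ·) := by
  ext v
  simp only [mem_subwords, Finset.mem_union, Finset.mem_image, sublist_cons_iff]
  grind

theorem subwords_inter_image_cons (a : α) (w : List α) :
    w.subwords ∩ w.subwords.image (a :: ·) = w.subwordsHeadEq a := by
  ext v
  simp only [subwordsHeadEq, Finset.mem_inter, Finset.mem_image, Finset.mem_filter, mem_subwords]
  constructor
  · rintro ⟨hv, s, -, rfl⟩
    exact ⟨hv, rfl⟩
  · rintro ⟨hv, hhead⟩
    obtain ⟨s, rfl⟩ := head?_eq_some_iff.mp hhead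
    exact ⟨hv, s, (sublist_cons_self a s).trans hv, rfl⟩

theorem card_subwords_cons (a : α) (w : List α) :
    #(a :: w).subwords + #(w.subwordsHeadEq a) = 2 * #w.subwords := by
  rw [subwords_cons, ← subwords_inter_image_cons, Finset.card_union_add_card_inter,
    Finset.card_image_of_injective _ (cons_injective (a := a))]
  ring

theorem subwordsHeadEq_cons_self (a : α) (w : List α) :
    (a :: w).subwordsHeadEq a = w.subwords.image (a :: ·) := by
  ext v
  simp only [subwordsHeadEq, subwords_cons, Finset.filter_union, Finset.mem_union,
    Finset.mem_filter, Finset.mem_image, mem_subwords]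
  constructor
  · rintro (⟨hv, hhead⟩ | ⟨⟨s, hs, rfl⟩, -⟩)
    · obtain ⟨s, rfl⟩ := head?_eq_some_iff.mp hhead
      exact ⟨s, (sublist_cons_self a s).trans hv, rfl⟩
    · exact ⟨s, hs, rfl⟩
  · rintro ⟨s, hs, rfl⟩
    exact Or.inr ⟨⟨s, hs, rfl⟩, rfl⟩

theorem card_subwordsHeadEq_cons_self (a : α) (w : List α) :
    #((a :: w).subwordsHeadEq a) = #w.subwords := by
  rw [subwordsHeadEq_cons_self, Finset.card_image_of_injective _ (cons_injective (a := a))]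

theorem subwordsHeadEq_cons_of_ne {x a : α} (h : x ≠ a) (w : List α) :
    (a :: w).subwordsHeadEq x = w.subwordsHeadEq x := by
  rw [subwordsHeadEq, subwords_cons, Finset.filter_union, Finset.filter_image]
  simp [Ne.symm h, subwordsHeadEq]

theorem card_subwordsHeadNe_add_card_subwordsHeadEq (a : α) (w : List α) :
    #(w.subwordsHeadNe a) + #(w.subwordsHeadEq a) = #w.subwords := by
  rw [add_comm]
  exact Finset.card_filter_add_card_filter_not _

theorem card_subwordsHeadNe_cons_self (a : α) (w : List α) :
    #((a :: w).subwordsHeadNe a) = #(w.subwordsHeadNe a) := by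
  have := card_subwordsHeadNe_add_card_subwordsHeadEq a (a :: w)
  have := card_subwordsHeadNe_add_card_subwordsHeadEq a w
  have := card_subwords_cons a w
  have := card_subwordsHeadEq_cons_self a w
  omega

theorem card_subwordsHeadNe_replicate_append (a : α) (n : ℕ) (w : List α) :
    #((replicate n a ++ w).subwordsHeadNe a) = #(w.subwordsHeadNe a) := by
  induction n with
  | zero => rfl
  | succ n ih => rw [replicate_succ, cons_append, card_subwordsHeadNe_cons_self, ih]

theorem card_subwordsHeadNe_cons_cons {x y z : α} (hxy : x ≠ y) (hxz : x ≠ z) (hyz : y ≠ z)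
    (w : List α) :
    #((x :: y :: w).subwordsHeadNe z) + 2 * #(w.subwordsHeadNe z) =
      #((x :: w).subwordsHeadNe z) + 2 * #((y :: w).subwordsHeadNe z) := by
  have hxyw := card_subwordsHeadNe_add_card_subwordsHeadEq z (x :: y :: w)
  have hxw := card_subwordsHeadNe_add_card_subwordsHeadEq z (x :: w)
  have hyw := card_subwordsHeadNe_add_card_subwordsHeadEq z (y :: w)
  rw [subwordsHeadEq_cons_of_ne hxz.symm, subwordsHeadEq_cons_of_ne hyz.symm] at hxyw
  rw [subwordsHeadEq_cons_of_ne hxz.symm] at hxw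
  rw [subwordsHeadEq_cons_of_ne hyz.symm] at hyw
  have := card_subwordsHeadNe_add_card_subwordsHeadEq z w
  have := card_subwords_cons x (y :: w)
  rw [subwordsHeadEq_cons_of_ne hxy] at this
  have := card_subwords_cons x w
  have := card_subwords_cons y w
  omega

end List

theorem lbCount_eq_card_subwordsHeadNe (u : List ℕ) : lbCount u = #(u.subwordsHeadNe 0) := by
  rw [lbCount, ← List.card_toFinset, List.toFinset_filter]
  simp [List.subwordsHeadNe, List.subwords]

theorem Sb_eq_card_subwordsHeadNe (b n : ℕ) :
    Sb b n = #((Nat.digits b n).reverse.subwordsHeadNe 0) :=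
  lbCount_eq_card_subwordsHeadNe _

def paddedDigits (b k r : ℕ) : List ℕ :=
  List.replicate (k - (Nat.digits b r).length) 0 ++ (Nat.digits b r).reverse

theorem Sb_eq_card_paddedDigits (b k r : ℕ) :
    Sb b r = #((paddedDigits b k r).subwordsHeadNe 0) := by
  rw [Sb_eq_card_subwordsHeadNe, paddedDigits, List.card_subwordsHeadNe_replicate_append]

theorem digits_reverse_mul_pow_add {b m k r : ℕ} (hb : 1 < b) (hm : m ≠ 0) (hmb : m < b)
    (hr : r < b ^ k) :
    (Nat.digits b (m * b ^ k + r)).reverse = m :: paddedDigits b k r := by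
  have hlen := (Nat.digits_length_le_iff hb r).mpr hr
  have h := Nat.digits_append_zeroes_append_digits (k := k - (Nat.digits b r).length) (n := r) hb
    (Nat.pos_of_ne_zero hm)
  rw [Nat.digits_of_lt b m hm hmb, Nat.add_sub_cancel' hlen] at h
  rw [paddedDigits, mul_comm, add_comm, ← h]
  simp

theorem length_paddedDigits {b k r : ℕ} (hb : 1 < b) (hr : r < b ^ k) :
    (paddedDigits b k r).length = k := by
  simp [paddedDigits, Nat.sub_add_cancel ((Nat.digits_length_le_iff hb r).mpr hr)]

theorem paddedDigits_succ_mul_pow_add {b m k r : ℕ} (hb : 1 < b) (hm : m ≠ 0) (hmb : m < b)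
    (hr : r < b ^ k) :
    paddedDigits b (k + 1) (m * b ^ k + r) = m :: paddedDigits b k r := by
  rw [paddedDigits, ← List.length_reverse, digits_reverse_mul_pow_add hb hm hmb hr,
    List.length_cons, length_paddedDigits hb hr, Nat.sub_self, List.replicate_zero, List.nil_append]

theorem stmt7 (b x y ℓ r : ℕ) (hb : 2 ≤ b) (hx : 1 ≤ x) (hxb : x < b)
    (hy : 1 ≤ y) (hyb : y < b) (hxy : x ≠ y)
    (hℓ : 1 ≤ ℓ) (hr : r < b ^ (ℓ - 1)) :
    (Sb b (x * b ^ ℓ + y * b ^ (ℓ - 1) + r) : ℤ) =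
      Sb b (x * b ^ (ℓ - 1) + r) + 2 * Sb b (y * b ^ (ℓ - 1) + r) - 2 * Sb b r := by
  obtain ⟨k, rfl⟩ : ∃ k, ℓ = k + 1 := ⟨ℓ - 1, by omega⟩
  rw [Nat.add_sub_cancel] at hr ⊢
  have hx0 : x ≠ 0 := Nat.pos_iff_ne_zero.mp hx
  have hy0 : y ≠ 0 := Nat.pos_iff_ne_zero.mp hy
  have hyr : y * b ^ k + r < b ^ (k + 1) :=
    calc y * b ^ k + r < (y + 1) * b ^ k := by nlinarith
      _ ≤ b ^ (k + 1) := by rw [pow_succ']; gcongr; omega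
  have key := List.card_subwordsHeadNe_cons_cons hxy hx0 hy0 (paddedDigits b k r)
  rw [add_assoc, Sb_eq_card_subwordsHeadNe, Sb_eq_card_subwordsHeadNe, Sb_eq_card_subwordsHeadNe,
    digits_reverse_mul_pow_add hb hx0 hxb hyr, paddedDigits_succ_mul_pow_add hb hy0 hyb hr,
    digits_reverse_mul_pow_add hb hx0 hxb hr, digits_reverse_mul_pow_add hb hy0 hyb hr,
    Sb_eq_card_paddedDigits b k r]
  omega
end

section
/- For every b ≥ 2 and every n ≥ 0, S_b(b·n + b − 1) = (2b − 1)·S_b(n) − Σ_{s=0}^{b-2} S_b(b·n + s). -/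
/-!
Appending a digit `s` to a word `w`, the `L_b`-subwords of `w ++ [s]` are those of `w`
together with `v ++ [s]` for the `L_b`-subwords `v` of `w` (except `v = ε` when `s = 0`);
the two families overlap exactly in the subwords of `w` ending in `s`. Summing over all
digits `s < b`, the overlaps partition the nonempty subwords of `w`, so
`∑_{s<b} S_b(b n + s) = b S_b(n) + (b S_b(n) - 1) - (S_b(n) - 1) = (2b - 1) S_b(n)`.
-/

open Finset

def lbSubwords (u : List ℕ) : Finset (List ℕ) :=
  (u.sublists.filter (fun v => v.head? ≠ some 0)).toFinset

lemma lbCount_eq_card_lbSubwords (u : List ℕ) : lbCount u = (lbSubwords u).card :=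
  (List.card_toFinset _).symm

@[simp]
lemma mem_lbSubwords {u x : List ℕ} : x ∈ lbSubwords u ↔ x.Sublist u ∧ x.head? ≠ some 0 := by
  simp [lbSubwords]

lemma nil_mem_lbSubwords (u : List ℕ) : [] ∈ lbSubwords u := by
  simp

lemma lbSubwords_zero_cons (u : List ℕ) : lbSubwords (0 :: u) = lbSubwords u := by
  ext x
  simp only [mem_lbSubwords, List.sublist_cons_iff]
  constructor
  · rintro ⟨hsub | ⟨r, rfl, _⟩, hhead⟩
    · exact ⟨hsub, hhead⟩
    · simp at hhead
  · rintro ⟨hsub, hhead⟩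
    exact ⟨Or.inl hsub, hhead⟩

lemma head?_append_singleton_ne_zero {v : List ℕ} {s : ℕ} :
    (v ++ [s]).head? ≠ some 0 ↔ v.head? ≠ some 0 ∧ (v ≠ [] ∨ s ≠ 0) := by
  cases v <;> simp

def appendable (s : ℕ) (w : List ℕ) : Finset (List ℕ) :=
  (lbSubwords w).filter (fun v => v ≠ [] ∨ s ≠ 0)

lemma card_appendable (s : ℕ) (w : List ℕ) :
    ((appendable s w).card : ℤ) = (lbSubwords w).card - if s = 0 then 1 else 0 := by
  rcases eq_or_ne s 0 with rfl | hs
  · simp only [appendable, ne_eq, not_true_eq_false, or_false, filter_ne', if_true]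
    rw [card_erase_of_mem (nil_mem_lbSubwords w),
      Nat.cast_sub (card_pos.mpr ⟨_, nil_mem_lbSubwords w⟩)]
    simp
  · simp [appendable, hs]

lemma lbSubwords_append_singleton (w : List ℕ) (s : ℕ) :
    lbSubwords (w ++ [s]) = lbSubwords w ∪ (appendable s w).image (· ++ [s]) := by
  ext x
  simp only [mem_union, mem_image, appendable, mem_filter, mem_lbSubwords]
  constructor
  · rintro ⟨hsub, hhead⟩
    obtain ⟨v, t, rfl, hv, ht⟩ := List.sublist_append_iff.mp hsub
    rcases List.sublist_singleton.mp ht with rfl | rfl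
    · exact Or.inl ⟨by simpa using hv, by simpa using hhead⟩
    · exact Or.inr ⟨v, ⟨⟨hv, (head?_append_singleton_ne_zero.mp hhead).1⟩,
        (head?_append_singleton_ne_zero.mp hhead).2⟩, rfl⟩
  · rintro (⟨hsub, hhead⟩ | ⟨v, ⟨⟨hsub, hhead⟩, hv⟩, rfl⟩)
    · exact ⟨hsub.trans (List.sublist_append_left _ _), hhead⟩
    · exact ⟨hsub.append (List.Sublist.refl _), head?_append_singleton_ne_zero.mpr ⟨hhead, hv⟩⟩

lemma lbSubwords_inter_image_appendable (w : List ℕ) (s : ℕ) :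
    lbSubwords w ∩ (appendable s w).image (· ++ [s]) =
      (lbSubwords w).filter (·.getLast? = some s) := by
  ext x
  simp only [mem_inter, mem_image, mem_filter]
  constructor
  · rintro ⟨hx, v, _, rfl⟩
    exact ⟨hx, List.getLast?_concat⟩
  · rintro ⟨hx, hlast⟩
    obtain ⟨v, rfl⟩ : ∃ v, x = v ++ [s] :=
      ⟨x.dropLast, (List.dropLast_append_getLast? _ hlast).symm⟩
    obtain ⟨hsub, hhead⟩ := mem_lbSubwords.mp hx
    obtain ⟨hvhead, hv⟩ := head?_append_singleton_ne_zero.mp hhead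
    exact ⟨hx, v, mem_filter.mpr
      ⟨mem_lbSubwords.mpr ⟨(List.sublist_append_left v [s]).trans hsub, hvhead⟩, hv⟩, rfl⟩

lemma card_lbSubwords_append_singleton (w : List ℕ) (s : ℕ) :
    ((lbSubwords (w ++ [s])).card : ℤ) = (lbSubwords w).card + (appendable s w).card -
      ((lbSubwords w).filter (·.getLast? = some s)).card := by
  have h := card_union_add_card_inter (lbSubwords w) ((appendable s w).image (· ++ [s]))
  rw [← lbSubwords_append_singleton, lbSubwords_inter_image_appendable,
    card_image_of_injective _ (List.append_left_injective [s])] at h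
  omega

lemma sum_card_lbSubwords_getLast {b : ℕ} {w : List ℕ} (hw : ∀ d ∈ w, d < b) :
    ∑ s ∈ range b, ((lbSubwords w).filter (·.getLast? = some s)).card =
      (lbSubwords w).card - 1 := by
  have hmaps : ∀ x ∈ (lbSubwords w).erase [], x.getLast? ∈ (range b).image some := by
    intro x hx
    obtain ⟨hne, hx⟩ := mem_erase.mp hx
    rw [List.getLast?_eq_some_getLast hne]
    exact mem_image_of_mem _
      (mem_range.mpr (hw _ ((mem_lbSubwords.mp hx).1.subset (List.getLast_mem hne))))
  rw [← card_erase_of_mem (nil_mem_lbSubwords w), card_eq_sum_card_fiberwise hmaps,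
    sum_image (fun _ _ _ _ h => Option.some_injective _ h)]
  refine sum_congr rfl fun s _ => ?_
  rw [filter_erase, erase_eq_of_notMem (by simp)]

lemma sum_card_lbSubwords_append_digit {b : ℕ} (hb : 0 < b) {w : List ℕ}
    (hw : ∀ d ∈ w, d < b) :
    ∑ s ∈ range b, ((lbSubwords (w ++ [s])).card : ℤ) = (2 * b - 1) * (lbSubwords w).card := by
  have hA : ∑ s ∈ range b, ((appendable s w).card : ℤ) = b * (lbSubwords w).card - 1 := by
    simp [card_appendable, sum_sub_distrib, hb]
  have hE : ∑ s ∈ range b, (((lbSubwords w).filter (·.getLast? = some s)).card : ℤ) =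
      (lbSubwords w).card - 1 := by
    rw [← Nat.cast_sum, sum_card_lbSubwords_getLast hw,
      Nat.cast_sub (card_pos.mpr ⟨_, nil_mem_lbSubwords w⟩), Nat.cast_one]
  simp only [card_lbSubwords_append_singleton, sum_sub_distrib, sum_add_distrib, hA, hE,
    sum_const, card_range, nsmul_eq_mul]
  ring

lemma Sb_mul_add {b : ℕ} (hb : 1 < b) (n : ℕ) {s : ℕ} (hs : s < b) :
    Sb b (b * n + s) = (lbSubwords ((Nat.digits b n).reverse ++ [s])).card := by
  by_cases h : s ≠ 0 ∨ n ≠ 0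
  · rw [Sb, add_comm, Nat.digits_add b hb s n hs h, List.reverse_cons,
      lbCount_eq_card_lbSubwords]
  · obtain ⟨rfl, rfl⟩ : s = 0 ∧ n = 0 := by tauto
    simp [Sb, lbCount_eq_card_lbSubwords, lbSubwords_zero_cons]

theorem sum_Sb_mul_add {b : ℕ} (hb : 1 < b) (n : ℕ) :
    ∑ s ∈ range b, (Sb b (b * n + s) : ℤ) = (2 * b - 1) * Sb b n := by
  have hdigits : ∀ d ∈ (Nat.digits b n).reverse, d < b := fun d hd =>
    Nat.digits_lt_base hb (List.mem_reverse.mp hd)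
  rw [Sb, lbCount_eq_card_lbSubwords,
    ← sum_card_lbSubwords_append_digit (by omega) hdigits]
  exact sum_congr rfl fun s hs => by rw [Sb_mul_add hb n (mem_range.mp hs)]

theorem stmt8 (b n : ℕ) (hb : 2 ≤ b) :
    (Sb b (b * n + b - 1) : ℤ) =
      (2 * b - 1) * Sb b n - ∑ s ∈ Finset.range (b - 1), (Sb b (b * n + s) : ℤ) := by
  have hsum := sum_Sb_mul_add hb n
  obtain ⟨c, rfl⟩ : ∃ c, b = c + 1 := ⟨b - 1, by omega⟩
  rw [sum_range_succ] at hsum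
  rw [show (c + 1) * n + (c + 1) - 1 = (c + 1) * n + c by omega, Nat.add_sub_cancel]
  linarith
end

section
/- For all b ≥ 2, all ℓ ≥ 1, and all r with 0 ≤ r < b^ℓ, one has S_b((b−1)·b^ℓ + r) = S_b((b−1)·b^ℓ + b^ℓ − r − 1); i.e., the sequence (S_b(n)) is palindromic on the interval [(b−1)b^ℓ, b^{ℓ+1} − 1]. -/
/-!
Write `n = (b-1)·b^ℓ + r`; its base-`b` expansion is the digit `b-1` followed by the `ℓ`
digits of `r` (padded with zeros), and that of the mirrored number `(b-1)·b^ℓ + b^ℓ - 1 - r`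
is `b-1` followed by the complemented digits `b-1-d`.  Subwords without a leading zero of
`(b-1) w` and of `(b-1) w̄` are in bijection: a subword starting with the top digit `b-1` keeps
it and has its remaining digits complemented, any other subword lies in `w` and is
complemented entirely, which sends a leading digit in `[1, b-2]` into `[1, b-2]`.
-/

open List

section Words

variable {b : ℕ}

def digitCompl (b d : ℕ) : ℕ := b - 1 - d

lemma digitCompl_lt (hb : 0 < b) (d : ℕ) : digitCompl b d < b := by
  unfold digitCompl; omega

lemma digitCompl_digitCompl {d : ℕ} (hd : d < b) : digitCompl b (digitCompl b d) = d := by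
  unfold digitCompl; omega

lemma map_digitCompl_map_digitCompl {w : List ℕ} (hw : ∀ d ∈ w, d < b) :
    (w.map (digitCompl b)).map (digitCompl b) = w := by
  rw [map_map]
  exact (map_congr_left fun d hd => digitCompl_digitCompl (hw d hd)).trans (map_id w)

def mirrorWord (b : ℕ) : List ℕ → List ℕ
  | [] => []
  | d :: t => (if d = b - 1 then d else digitCompl b d) :: t.map (digitCompl b)

lemma mirrorWord_mirrorWord {v : List ℕ} (hv : ∀ d ∈ v, d < b) (h0 : v.head? ≠ some 0) :
    mirrorWord b (mirrorWord b v) = v := by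
  obtain _ | ⟨d, t⟩ := v
  · rfl
  have hd : d < b := hv d mem_cons_self
  have hd0 : d ≠ 0 := by simpa using h0
  have ht : (t.map (digitCompl b)).map (digitCompl b) = t :=
    map_digitCompl_map_digitCompl fun x hx => hv x (mem_cons_of_mem d hx)
  by_cases htop : d = b - 1
  · simp [mirrorWord, htop, ht]
  · have hcompl : digitCompl b d ≠ b - 1 := by unfold digitCompl; omega
    simp [mirrorWord, htop, hcompl, ht, digitCompl_digitCompl hd]

lemma mirrorWord_sublist {w v : List ℕ} (hw : ∀ d ∈ w, d < b) (hv : v <+ (b - 1) :: w)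
    (h0 : v.head? ≠ some 0) :
    mirrorWord b v <+ (b - 1) :: w.map (digitCompl b) ∧ (mirrorWord b v).head? ≠ some 0 := by
  obtain _ | ⟨d, t⟩ := v
  · simp [mirrorWord]
  have hd0 : d ≠ 0 := by simpa using h0
  rcases cons_sublist_cons'.mp hv with hdw | ⟨htop, htw⟩
  · have hd : d < b := hw d (hdw.subset mem_cons_self)
    by_cases htop : d = b - 1
    · refine ⟨?_, by simp [mirrorWord, htop]; omega⟩
      simpa [mirrorWord, htop] using
        ((sublist_cons_self d t).trans hdw).map (digitCompl b)
    · refine ⟨?_, ?_⟩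
      · simpa [mirrorWord, htop] using (hdw.map (digitCompl b)).cons (b - 1)
      · simp only [mirrorWord, htop, if_false, head?_cons, ne_eq, Option.some.injEq]
        unfold digitCompl; omega
  · subst htop
    exact ⟨by simpa [mirrorWord] using htw.map (digitCompl b), by simpa [mirrorWord] using hd0⟩

def lbWords (u : List ℕ) : Finset (List ℕ) :=
  u.sublists.toFinset.filter fun v => v.head? ≠ some 0

lemma mem_lbWords {u v : List ℕ} : v ∈ lbWords u ↔ v <+ u ∧ v.head? ≠ some 0 := by
  simp [lbWords]

lemma lbCount_eq_card_lbWords (u : List ℕ) : lbCount u = (lbWords u).card := by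
  rw [lbCount, ← card_toFinset, toFinset_filter, lbWords]
  simp

lemma lbCount_pred_cons_map_digitCompl (hb : 2 ≤ b) {w : List ℕ} (hw : ∀ d ∈ w, d < b) :
    lbCount ((b - 1) :: w) = lbCount ((b - 1) :: w.map (digitCompl b)) := by
  have hw' : ∀ d ∈ w.map (digitCompl b), d < b := by
    simpa using fun d _ => digitCompl_lt (by omega) d
  have hdigits {u : List ℕ} (hu : ∀ d ∈ u, d < b) {v : List ℕ} (hv : v <+ (b - 1) :: u) :
      ∀ d ∈ v, d < b := fun d hd => by
    rcases mem_cons.mp (hv.subset hd) with rfl | hdu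
    exacts [by omega, hu d hdu]
  simp only [lbCount_eq_card_lbWords]
  refine Finset.card_bij' (fun v _ => mirrorWord b v) (fun v _ => mirrorWord b v)
    (fun v hv => ?_) (fun v hv => ?_) (fun v hv => ?_) (fun v hv => ?_) <;>
    simp only [mem_lbWords] at hv ⊢
  · exact mirrorWord_sublist hw hv.1 hv.2
  · simpa [map_digitCompl_map_digitCompl hw] using mirrorWord_sublist hw' hv.1 hv.2
  · exact mirrorWord_mirrorWord (hdigits hw hv.1) hv.2
  · exact mirrorWord_mirrorWord (hdigits hw' hv.1) hv.2

end Words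

section Digits

variable {b : ℕ}

lemma ofDigits_map_digitCompl_add {L : List ℕ} (hL : ∀ d ∈ L, d < b) :
    Nat.ofDigits b (L.map (digitCompl b)) + Nat.ofDigits b L + 1 = b ^ L.length := by
  induction L with
  | nil => simp
  | cons x t ih =>
    have hx : digitCompl b x + x + 1 = b := by
      have := hL x mem_cons_self
      unfold digitCompl; omega
    have ht := ih fun d hd => hL d (mem_cons_of_mem x hd)
    simp only [map_cons, Nat.ofDigits_cons, length_cons, pow_succ]
    nlinarith

lemma digits_mul_pow_length_add_ofDigits {d : ℕ} {L : List ℕ} (hd0 : d ≠ 0) (hdb : d < b)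
    (hL : ∀ x ∈ L, x < b) : Nat.digits b (d * b ^ L.length + Nat.ofDigits b L) = L ++ [d] := by
  have hdigits : ∀ x ∈ L ++ [d], x < b := by
    simpa [or_imp, forall_and] using ⟨hL, hdb⟩
  rw [← Nat.digits_ofDigits b (by omega) (L ++ [d]) hdigits (by simpa using hd0),
    Nat.ofDigits_append, Nat.ofDigits_singleton, add_comm, mul_comm]

lemma Sb_pred_mul_pow_length_add_ofDigits (hb : 2 ≤ b) {L : List ℕ} (hL : ∀ x ∈ L, x < b) :
    Sb b ((b - 1) * b ^ L.length + Nat.ofDigits b L) = lbCount ((b - 1) :: L.reverse) := by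
  rw [Sb, digits_mul_pow_length_add_ofDigits (by omega) (by omega) hL]
  simp

end Digits

theorem stmt12_general (b ℓ r : ℕ) (hb : 2 ≤ b) (hr : r < b ^ ℓ) :
    Sb b ((b - 1) * b ^ ℓ + r) = Sb b ((b - 1) * b ^ ℓ + b ^ ℓ - r - 1) := by
  obtain ⟨L, ⟨rfl, hL⟩, rfl⟩ := (Nat.bijOn_ofDigits (by omega) ℓ).surjOn hr
  have hL' : ∀ x ∈ L.map (digitCompl b), x < b := by
    simpa using fun d _ => digitCompl_lt (by omega) d
  have hmirror : (b - 1) * b ^ L.length + b ^ L.length - Nat.ofDigits b L - 1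
      = (b - 1) * b ^ (L.map (digitCompl b)).length + Nat.ofDigits b (L.map (digitCompl b)) := by
    have := ofDigits_map_digitCompl_add hL
    rw [length_map]
    omega
  rw [hmirror, Sb_pred_mul_pow_length_add_ofDigits hb hL,
    Sb_pred_mul_pow_length_add_ofDigits hb hL', ← map_reverse]
  exact lbCount_pred_cons_map_digitCompl hb fun d hd => hL d (mem_reverse.mp hd)

theorem stmt12 (b ℓ r : ℕ) (hb : 2 ≤ b) (hℓ : 1 ≤ ℓ) (hr : r < b ^ ℓ) :
    Sb b ((b - 1) * b ^ ℓ + r) = Sb b ((b - 1) * b ^ ℓ + b ^ ℓ - r - 1) :=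
  stmt12_general b ℓ r hb hr
end

section
/- For any base b ≥ 2 and any word u over {0,...,b-1}, let ū be obtained from u by replacing each letter a by (b−1)−a. Then the number of words in L_b occurring as scattered subwords of (b−1)u equals the number of words in L_b occurring as scattered subwords of (b−1)ū. -/
theorem List.map_map_eq_self_of_forall_mem {α : Type*} {σ : α → α} {u : List α}
    (hσ : ∀ a ∈ u, σ (σ a) = a) : (u.map σ).map σ = u := by
  rw [map_map]
  exact (map_congr_left hσ).trans (map_id' u)

section Reflection

open List

variable {α : Type*} [DecidableEq α]

def headAvoidingSublists (z : α) (w : List α) : Finset (List α) :=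
  (w.sublists.filter (fun v => v.head? ≠ some z)).toFinset

theorem mem_headAvoidingSublists {z : α} {w v : List α} :
    v ∈ headAvoidingSublists z w ↔ v <+ w ∧ v.head? ≠ some z := by
  simp [headAvoidingSublists]

def reflectSubword (σ : α → α) (c : α) : List α → List α
  | [] => []
  | a :: x => (if a = c then c else σ a) :: x.map σ

variable {σ : α → α} {z c : α} {u v : List α}

theorem reflectSubword_mem (hσ : ∀ a ∈ u, σ (σ a) = a) (hzc : σ z = c)
    (hv : v ∈ headAvoidingSublists z (c :: u)) :
    reflectSubword σ c v ∈ headAvoidingSublists z (c :: u.map σ) := by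
  rw [mem_headAvoidingSublists] at hv ⊢
  obtain ⟨hsub, hhead⟩ := hv
  match v, hsub, hhead with
  | [], _, _ => simp [reflectSubword]
  | a :: x, hsub, hhead =>
    by_cases ha : a = c
    · subst ha
      simp only [reflectSubword]
      exact ⟨cons_sublist_cons.mpr (hsub.of_cons_cons.map σ), hhead⟩
    · have hxu := hsub.of_cons_of_ne ha
      simp only [reflectSubword, if_neg ha, head?_cons, ne_eq, Option.some.injEq]
      refine ⟨(hxu.map σ).cons c, fun hσa => ha ?_⟩
      rw [← hσ a (hxu.subset mem_cons_self), hσa, hzc]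

theorem reflectSubword_reflectSubword (hσ : ∀ a ∈ u, σ (σ a) = a) (hcz : σ c = z)
    (hv : v ∈ headAvoidingSublists z (c :: u)) :
    reflectSubword σ c (reflectSubword σ c v) = v := by
  rw [mem_headAvoidingSublists] at hv
  obtain ⟨hsub, hhead⟩ := hv
  match v, hsub, hhead with
  | [], _, _ => rfl
  | a :: x, hsub, hhead =>
    by_cases ha : a = c
    · subst ha
      have hx : ∀ d ∈ x, σ (σ d) = d := fun d hd => hσ d (hsub.of_cons_cons.subset hd)
      simp [reflectSubword, map_map_eq_self_of_forall_mem hx]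
    · have hxu := hsub.of_cons_of_ne ha
      have hax : ∀ d ∈ a :: x, σ (σ d) = d := fun d hd => hσ d (hxu.subset hd)
      have hσa : σ a ≠ c := by
        rintro hσa
        rw [head?_cons, ne_eq, Option.some.injEq, ← hax a mem_cons_self, hσa, hcz] at hhead
        exact hhead rfl
      simpa [reflectSubword, ha, hσa] using map_map_eq_self_of_forall_mem hax

theorem card_headAvoidingSublists_cons_map (hσ : ∀ a ∈ u, σ (σ a) = a) (hzc : σ z = c)
    (hcz : σ c = z) :
    (headAvoidingSublists z (c :: u)).card = (headAvoidingSublists z (c :: u.map σ)).card := by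
  have hσ' : ∀ a ∈ u.map σ, σ (σ a) = a := by
    simp only [mem_map, forall_exists_index, and_imp, forall_apply_eq_imp_iff₂]
    exact fun a ha => by rw [hσ a ha]
  refine Finset.card_nbij' (reflectSubword σ c) (reflectSubword σ c) ?_ ?_ ?_ ?_
  · exact fun v hv => reflectSubword_mem hσ hzc hv
  · intro v hv
    simpa [map_map_eq_self_of_forall_mem hσ] using reflectSubword_mem hσ' hzc hv
  · exact fun v hv => reflectSubword_reflectSubword hσ hcz hv
  · exact fun v hv => reflectSubword_reflectSubword hσ' hcz hv

end Reflection

theorem lbCount_eq_card_headAvoidingSublists (w : List ℕ) :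
    lbCount w = (headAvoidingSublists 0 w).card :=
  (List.card_toFinset _).symm

theorem stmt13_general (b : ℕ) (u : List ℕ) (hu : ∀ d ∈ u, d < b) :
    lbCount ((b - 1) :: u) = lbCount ((b - 1) :: u.map (fun a => b - 1 - a)) := by
  rw [lbCount_eq_card_headAvoidingSublists, lbCount_eq_card_headAvoidingSublists]
  refine card_headAvoidingSublists_cons_map (fun a ha => ?_) (Nat.sub_zero _) (Nat.sub_self _)
  have := hu a ha
  omega

theorem stmt13 (b : ℕ) (hb : 2 ≤ b) (u : List ℕ) (hu : ∀ d ∈ u, d < b) :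
    lbCount ((b - 1) :: u) = lbCount ((b - 1) :: u.map (fun a => b - 1 - a)) :=
  stmt13_general b u hu
end

section
/- For all b ≥ 2, all x ∈ {1,...,b−1}, all ℓ ≥ 1, and all r with 0 ≤ r ≤ b^{ℓ-1}, one has A_b(x·b^ℓ + r) = (2b−2)·(2x−1)·(2b−1)^{ℓ-1} + A_b(x·b^{ℓ-1} + r) + A_b(r). -/
open Finset

/-! Write `N_a(u)` for the number of distinct scattered subwords of `u` not beginning with the
letter `a`, so that `S_b(n)` is `N_0` of the base-`b` word of `n`, and leading zeros do not change
`N_0`. Sorting the subwords of `c :: u` by whether they need the leading `c` gives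
`N_a(a :: u) = N_a(u)` and `N_a(c :: u) = N_a(u) + N_c(u)` for `c ≠ a`. Two consequences:

* for a digit `x ≠ 0`, `S_b(x 0 w) = S_b(x w) + S_b(w)`, which splits the sum over the block
  `x b^ℓ + [0, r)` into the sums over `x b^(ℓ-1) + [0, r)` and `[0, r)`;
* summed over all `b^ℓ` digit words of length `ℓ`, `N_a` gives `(2b-1)^ℓ` for every digit `a`,
  whence `A_b(x b^ℓ) = (2x-1)(2b-1)^ℓ`. -/

section Subwords

variable {α : Type*} [DecidableEq α]

def subwordFinset (u : List α) : Finset (List α) := u.sublists.toFinset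

def headNeCount (a : α) (u : List α) : ℕ :=
  ((subwordFinset u).filter (·.head? ≠ some a)).card

@[simp] lemma mem_subwordFinset {u v : List α} : v ∈ subwordFinset u ↔ v.Sublist u := by
  simp [subwordFinset]

lemma subwordFinset_cons (c : α) (u : List α) :
    subwordFinset (c :: u) = subwordFinset u ∪ (subwordFinset u).image (c :: ·) := by
  ext v
  simp only [mem_subwordFinset, mem_union, mem_image, List.sublist_cons_iff]
  grind

lemma mem_image_cons_of_sublist {c : α} {u v : List α} (hv : v.Sublist u)
    (hc : v.head? = some c) : v ∈ (subwordFinset u).image (c :: ·) := by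
  obtain _ | ⟨d, w⟩ := v
  · simp at hc
  · obtain rfl : d = c := Option.some.inj hc
    exact mem_image.2 ⟨w, by simpa using (List.sublist_cons_self _ w).trans hv, rfl⟩

@[simp] lemma headNeCount_nil (a : α) : headNeCount a [] = 1 := rfl

lemma headNeCount_cons_self (a : α) (u : List α) : headNeCount a (a :: u) = headNeCount a u := by
  rw [headNeCount, subwordFinset_cons, filter_union, filter_image]
  simp [headNeCount]

lemma headNeCount_cons_of_ne {a c : α} (h : c ≠ a) (u : List α) :
    headNeCount a (c :: u) = headNeCount a u + headNeCount c u := by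
  unfold headNeCount
  rw [subwordFinset_cons, filter_union]
  set S := subwordFinset u
  set I := S.image (c :: ·)
  have hI : I.filter (·.head? ≠ some a) = I := filter_true_of_mem (by simp [I, h])
  have hinter : S.filter (·.head? ≠ some a) ∩ I = S ∩ I := by
    ext v
    simp only [mem_inter, mem_filter, I, mem_image]
    grind
  have hsdiff : S \ I = S.filter (·.head? ≠ some c) := by
    ext v
    simp only [mem_sdiff, mem_filter]
    constructor
    · rintro ⟨hv, hvI⟩
      exact ⟨hv, fun hc => hvI (mem_image_cons_of_sublist (mem_subwordFinset.1 hv) hc)⟩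
    · rintro ⟨hv, hc⟩
      refine ⟨hv, fun hvI => ?_⟩
      obtain ⟨w, -, rfl⟩ := mem_image.1 hvI
      exact hc rfl
  have hcard := card_union_add_card_inter (S.filter (·.head? ≠ some a)) I
  have hS := card_sdiff_add_card_inter S I
  rw [hinter, card_image_of_injective _ List.cons_injective] at hcard
  rw [hsdiff] at hS
  rw [hI]
  omega

lemma headNeCount_replicate_append (a : α) (k : ℕ) (u : List α) :
    headNeCount a (List.replicate k a ++ u) = headNeCount a u := by
  induction k with
  | zero => rfl
  | succ k ih => rw [List.replicate_succ, List.cons_append, headNeCount_cons_self, ih]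

lemma headNeCount_cons_cons_self {a x : α} (hx : x ≠ a) (w : List α) :
    headNeCount a (x :: a :: w) = headNeCount a (x :: w) + headNeCount a w := by
  rw [headNeCount_cons_of_ne hx, headNeCount_cons_of_ne hx, headNeCount_cons_self,
    headNeCount_cons_of_ne (Ne.symm hx)]
  ring

end Subwords

lemma lbCount_eq_headNeCount (u : List ℕ) : lbCount u = headNeCount 0 u := by
  simp only [lbCount, ← List.card_toFinset, List.toFinset_filter, decide_eq_true_eq]
  rfl

lemma Asum_add (b n r : ℕ) : Asum b (n + r) = Asum b n + ∑ m ∈ range r, Sb b (n + m) :=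
  sum_range_add _ _ _

section Digits

variable {b : ℕ}

lemma Sb_eq_headNeCount_digitsAppend (ℓ m : ℕ) :
    Sb b m = headNeCount 0 (Nat.digitsAppend b ℓ m).reverse := by
  rw [Sb, lbCount_eq_headNeCount, Nat.digitsAppend, List.reverse_append, List.reverse_replicate,
    headNeCount_replicate_append]

lemma reverse_digits_mul_pow_add (hb : 1 < b) {c ℓ m : ℕ} (hc : c ≠ 0) (hcb : c < b)
    (hm : m < b ^ ℓ) :
    (Nat.digits b (c * b ^ ℓ + m)).reverse = c :: (Nat.digitsAppend b ℓ m).reverse := by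
  have hlen : (Nat.digits b m).length ≤ ℓ := (Nat.digits_length_le_iff hb m).2 hm
  have h := Nat.digits_append_zeroes_append_digits (k := ℓ - (Nat.digits b m).length) (n := m) hb
    (Nat.pos_of_ne_zero hc)
  rw [Nat.add_sub_cancel' hlen, Nat.digits_of_lt b c hc hcb] at h
  rw [add_comm, mul_comm, ← h, Nat.digitsAppend]
  simp

lemma digitsAppend_succ_of_lt (hb : 1 < b) {ℓ m : ℕ} (hm : m < b ^ ℓ) :
    Nat.digitsAppend b (ℓ + 1) m = Nat.digitsAppend b ℓ m ++ [0] := by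
  have hlen : (Nat.digits b m).length ≤ ℓ := (Nat.digits_length_le_iff hb m).2 hm
  rw [Nat.digitsAppend, Nat.digitsAppend, Nat.sub_add_comm hlen, List.replicate_succ',
    List.append_assoc]

lemma Sb_mul_pow_add (hb : 1 < b) {c ℓ m : ℕ} (hcb : c < b) (hm : m < b ^ ℓ) :
    Sb b (c * b ^ ℓ + m) = headNeCount 0 (c :: (Nat.digitsAppend b ℓ m).reverse) := by
  rcases eq_or_ne c 0 with rfl | hc
  · rw [zero_mul, zero_add, headNeCount_cons_self, Sb_eq_headNeCount_digitsAppend ℓ]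
  · rw [Sb, lbCount_eq_headNeCount, reverse_digits_mul_pow_add hb hc hcb hm]

lemma Sb_mul_pow_succ_add (hb : 1 < b) {x ℓ m : ℕ} (hx : x ≠ 0) (hxb : x < b)
    (hm : m < b ^ ℓ) :
    Sb b (x * b ^ (ℓ + 1) + m) = Sb b (x * b ^ ℓ + m) + Sb b m := by
  have hm' : m < b ^ (ℓ + 1) := hm.trans_le (Nat.pow_le_pow_right (by omega) ℓ.le_succ)
  rw [Sb_mul_pow_add hb hxb hm', digitsAppend_succ_of_lt hb hm, List.reverse_append,
    List.reverse_singleton, List.singleton_append, headNeCount_cons_cons_self hx,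
    Sb_mul_pow_add hb hxb hm, Sb_eq_headNeCount_digitsAppend ℓ]

lemma sum_range_pow_digitsAppend_reverse {M : Type*} [AddCommMonoid M] (hb : 1 < b) (ℓ : ℕ)
    (g : List ℕ → M) :
    ∑ m ∈ range (b ^ ℓ), g (Nat.digitsAppend b ℓ m).reverse =
      ∑ L ∈ List.fixedLengthDigits hb ℓ, g L := by
  have hrev : ∑ L ∈ List.fixedLengthDigits hb ℓ, g L.reverse =
      ∑ L ∈ List.fixedLengthDigits hb ℓ, g L :=
    sum_nbij' List.reverse List.reverse (by simp [List.mem_fixedLengthDigits_iff])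
      (by simp [List.mem_fixedLengthDigits_iff]) (by simp) (by simp) (by simp)
  obtain ⟨hmaps, hinj, hsurj⟩ := Nat.bijOn_digitsAppend' hb ℓ
  rw [← hrev]
  exact sum_nbij _ hmaps hinj hsurj fun _ _ => rfl

lemma sum_headNeCount_fixedLengthDigits (hb : 1 < b) {a : ℕ} (ha : a < b) (ℓ : ℕ) :
    ∑ L ∈ List.fixedLengthDigits hb ℓ, headNeCount a L = (2 * b - 1) ^ ℓ := by
  induction ℓ generalizing a with
  | zero => simp
  | succ ℓ ih =>
    have hne : ∀ d ∈ (range b).erase a,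
        ∑ L ∈ List.fixedLengthDigits hb ℓ, headNeCount a (d :: L) = 2 * (2 * b - 1) ^ ℓ := by
      intro d hd
      obtain ⟨hda, hdb⟩ := mem_erase.1 hd
      rw [sum_congr rfl fun L _ => headNeCount_cons_of_ne hda L, sum_add_distrib, ih ha,
        ih (mem_range.1 hdb), ← two_mul]
    rw [List.fixedLengthDigits_succ_eq_disjiUnion, sum_disjiUnion]
    simp only [List.consFixedLengthDigits]
    rw [sum_congr rfl fun d _ => sum_image List.cons_injective.injOn,
      ← add_sum_erase _ _ (mem_range.2 ha), sum_congr rfl hne, sum_const,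
      card_erase_of_mem (mem_range.2 ha), card_range, smul_eq_mul]
    simp only [headNeCount_cons_self, ih ha]
    zify [(by omega : 1 ≤ b), (by omega : 1 ≤ 2 * b)]
    ring

lemma Asum_pow (hb : 1 < b) (ℓ : ℕ) : Asum b (b ^ ℓ) = (2 * b - 1) ^ ℓ := by
  rw [Asum, sum_congr rfl fun m _ => Sb_eq_headNeCount_digitsAppend ℓ m,
    sum_range_pow_digitsAppend_reverse hb ℓ (headNeCount 0),
    sum_headNeCount_fixedLengthDigits hb (by omega)]

lemma sum_Sb_mul_pow_add (hb : 1 < b) {c : ℕ} (hc : c ≠ 0) (hcb : c < b) (ℓ : ℕ) :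
    ∑ m ∈ range (b ^ ℓ), Sb b (c * b ^ ℓ + m) = 2 * (2 * b - 1) ^ ℓ := by
  rw [sum_congr rfl fun m hm => Sb_mul_pow_add hb hcb (mem_range.1 hm),
    sum_range_pow_digitsAppend_reverse hb ℓ fun L => headNeCount 0 (c :: L)]
  simp only [headNeCount_cons_of_ne hc, sum_add_distrib,
    sum_headNeCount_fixedLengthDigits hb (by omega : 0 < b),
    sum_headNeCount_fixedLengthDigits hb hcb]
  ring

lemma Asum_mul_pow (hb : 1 < b) {x : ℕ} (hx : 1 ≤ x) (hxb : x ≤ b) (ℓ : ℕ) :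
    Asum b (x * b ^ ℓ) = (2 * x - 1) * (2 * b - 1) ^ ℓ := by
  induction x, hx using Nat.le_induction with
  | base => simpa using Asum_pow hb ℓ
  | succ x hx ih =>
    rw [add_one_mul, Asum_add, ih (by omega), sum_Sb_mul_pow_add hb (by omega) (by omega),
      show 2 * (x + 1) - 1 = 2 * x - 1 + 2 by omega]
    ring

end Digits

theorem stmt16 (b x ℓ r : ℕ) (hb : 2 ≤ b) (hx : 1 ≤ x) (hxb : x < b)
    (hℓ : 1 ≤ ℓ) (hr : r ≤ b ^ (ℓ - 1)) :
    Asum b (x * b ^ ℓ + r) =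
      (2 * b - 2) * (2 * x - 1) * (2 * b - 1) ^ (ℓ - 1) +
        Asum b (x * b ^ (ℓ - 1) + r) + Asum b r := by
  obtain ⟨k, rfl⟩ : ∃ k, ℓ = k + 1 := ⟨ℓ - 1, by omega⟩
  rw [Nat.add_sub_cancel] at hr ⊢
  have hshift : ∑ m ∈ range r, Sb b (x * b ^ (k + 1) + m) =
      ∑ m ∈ range r, Sb b (x * b ^ k + m) + Asum b r := by
    rw [Asum, ← sum_add_distrib]
    exact sum_congr rfl fun m hm =>
      Sb_mul_pow_succ_add hb (by omega) hxb ((mem_range.1 hm).trans_le hr)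
  rw [Asum_add, hshift, Asum_add, Asum_mul_pow hb hx hxb.le, Asum_mul_pow hb hx hxb.le, pow_succ,
    show 2 * b - 1 = 2 * b - 2 + 1 by omega]
  ring
end
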